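/- Let G be a cubic graph with V = {v₁,…,v_n}, E = {e₁,…,e_m}. Build G' with vertex set V ∪ V* (V* = {v*₁,…,v*_n} a disjoint copy), edges E ∪ E* ∪ {{v_i, v*_i} : i}, where E* = {{v*_i, v*_j} : {v_i,v_j} ∈ E}. Habitats: H_ℓ = e_ℓ, H*_ℓ = e*_ℓ, and H'_ℓ = e_ℓ ∪ e*_ℓ for each e_ℓ ∈ E. Then G has a vertex cover of size at most p if and only if there is F ⊆ E(G') with |F| ≤ 2m + p satisfying every habitat. -/

import Mathlib

/-!
The single-edge habitats force `E ∪ E*` into `F`, so a solution with `|F| ≤ 2m + p` contains at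
most `p` rungs `{v, v*}`. Since rungs are the only edges of `G'` between the two copies,
the 4-cycle habitat of `e` is connected iff `F` contains a rung at an endpoint of `e`. Hence the
rung vertices of a solution form a vertex cover, and the rungs at a vertex cover complete
`E ∪ E*` to a solution.
-/

open SimpleGraph
open scoped Classical

def SatisfiesHab {V : Type*} (F : Set (Sym2 V)) (H : Set V) : Prop :=
  (∀ v ∈ H, ∃ e ∈ F, v ∈ e) ∧ ((SimpleGraph.fromEdgeSet F).induce H).Connected

/-- Two copies of `G` joined by a perfect matching between corresponding vertices. -/
def doubleGraph {V : Type*} (G : SimpleGraph V) : SimpleGraph (V ⊕ V) where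
  Adj a b := match a, b with
    | .inl u, .inl v => G.Adj u v
    | .inr u, .inr v => G.Adj u v
    | .inl u, .inr v => u = v
    | .inr u, .inl v => u = v
  symm := by
    constructor
    rintro (u | u) (v | v) h
    · exact G.symm.symm _ _ h
    · exact h.symm
    · exact h.symm
    · exact G.symm.symm _ _ h
  loopless := by
    constructor
    rintro (u | u) h <;> exact G.loopless.irrefl u h

section Habitat

variable {α β : Type*} {F : Set (Sym2 α)}

lemma exists_adj_of_connected_induce {G : SimpleGraph α} {S P : Set α}
    (h : (G.induce S).Connected) {x y : α} (hxS : x ∈ S) (hyS : y ∈ S) (hx : x ∈ P)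
    (hy : y ∉ P) : ∃ a ∈ S, ∃ b ∈ S, a ∈ P ∧ b ∉ P ∧ G.Adj a b := by
  obtain ⟨w⟩ := h.preconnected ⟨x, hxS⟩ ⟨y, hyS⟩
  obtain ⟨d, -, hd, hd'⟩ := w.exists_boundary_dart {z | z.1 ∈ P} hx hy
  exact ⟨_, d.fst.2, _, d.snd.2, hd, hd', d.adj⟩

lemma satisfiesHab_pair_iff {a b : α} (hab : a ≠ b) :
    SatisfiesHab F {a, b} ↔ s(a, b) ∈ F := by
  refine ⟨fun h => ?_, fun h => ⟨?_, induce_pair_connected_of_adj ⟨h, hab⟩⟩⟩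
  · obtain ⟨a', ha', b', hb', rfl, hba, hadj⟩ :=
      exists_adj_of_connected_induce h.2 (by simp) (by simp) (Set.mem_singleton a)
        (Set.mem_singleton_iff.not.2 hab.symm)
    obtain rfl : b' = b := (Set.mem_insert_iff.1 hb').resolve_left hba
    exact hadj.1
  · rintro v (rfl | rfl) <;> exact ⟨_, h, by simp⟩

lemma SatisfiesHab.union {A B : Set α} (hA : SatisfiesHab F A) (hB : SatisfiesHab F B)
    {a b : α} (ha : a ∈ A) (hb : b ∈ B) (hab : (fromEdgeSet F).Adj a b) :
    SatisfiesHab F (A ∪ B) :=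
  ⟨fun v hv => hv.elim (hA.1 v) (hB.1 v),
    connected_induce_union hA.2.preconnected hB.2.preconnected ha hb hab⟩

lemma habitat_mk (f : β → α) (u v : β) :
    {a | ∃ w ∈ s(u, v), a = f w} = {f u, f v} := by
  ext; simp [eq_comm]

lemma satisfiesHab_habitat_iff {f : β → α} (hf : Function.Injective f) {e : Sym2 β}
    (he : ¬e.IsDiag) : SatisfiesHab F {a | ∃ v ∈ e, a = f v} ↔ e.map f ∈ F := by
  induction e using Sym2.ind with
  | _ u v =>
    rw [habitat_mk, Sym2.map_mk]
    exact satisfiesHab_pair_iff (hf.ne (Sym2.mk_isDiag_iff.not.1 he))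

end Habitat

section Rungs

variable {V : Type*}

def rung (v : V) : Sym2 (V ⊕ V) := s(Sum.inl v, Sum.inr v)

lemma rung_injective : Function.Injective (rung : V → Sym2 (V ⊕ V)) := by
  intro u v h
  simpa [rung] using h

lemma map_inl_ne_map_inr (e e' : Sym2 V) : e.map Sum.inl ≠ e'.map Sum.inr := by
  induction e using Sym2.ind
  induction e' using Sym2.ind
  simp

lemma rung_ne_map (v : V) (e : Sym2 V) : rung v ≠ e.map Sum.inl ∧ rung v ≠ e.map Sum.inr := by
  induction e using Sym2.ind
  simp [rung]

def edgesWithRungs (G : SimpleGraph V) (C : Set V) : Set (Sym2 (V ⊕ V)) :=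
  Sym2.map Sum.inl '' G.edgeSet ∪ Sym2.map Sum.inr '' G.edgeSet ∪ rung '' C

lemma edgesWithRungs_subset_edgeSet (G : SimpleGraph V) (C : Set V) :
    edgesWithRungs G C ⊆ (doubleGraph G).edgeSet := by
  rintro _ ((⟨e, he, rfl⟩ | ⟨e, he, rfl⟩) | ⟨v, -, rfl⟩)
  · induction e using Sym2.ind
    exact he
  · induction e using Sym2.ind
    exact he
  · exact rfl

lemma ncard_edgesWithRungs [Finite V] (G : SimpleGraph V) (C : Set V) :
    (edgesWithRungs G C).ncard = 2 * G.edgeSet.ncard + C.ncard := by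
  have hLR : Disjoint (Sym2.map Sum.inl '' G.edgeSet) (Sym2.map Sum.inr '' G.edgeSet) := by
    rw [Set.disjoint_left]
    rintro _ ⟨e, -, rfl⟩ ⟨e', -, h⟩
    exact map_inl_ne_map_inr e e' h.symm
  have hRung : Disjoint (Sym2.map Sum.inl '' G.edgeSet ∪ Sym2.map Sum.inr '' G.edgeSet)
      (rung '' C) := by
    rw [Set.disjoint_right]
    rintro _ ⟨v, -, rfl⟩ (⟨e, -, h⟩ | ⟨e, -, h⟩)
    exacts [(rung_ne_map v e).1 h.symm, (rung_ne_map v e).2 h.symm]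
  rw [edgesWithRungs, Set.ncard_union_eq hRung, Set.ncard_union_eq hLR,
    Set.ncard_image_of_injective _ (Sym2.map.injective Sum.inl_injective),
    Set.ncard_image_of_injective _ (Sym2.map.injective Sum.inr_injective),
    Set.ncard_image_of_injective _ rung_injective, two_mul]

lemma satisfiesHab_edgesWithRungs {G : SimpleGraph V} {C : Set V} {e : Sym2 V}
    (he : e ∈ G.edgeSet) (hC : ∃ v ∈ C, v ∈ e) :
    SatisfiesHab (edgesWithRungs G C) {a | ∃ v ∈ e, a = Sum.inl v} ∧
    SatisfiesHab (edgesWithRungs G C) {a | ∃ v ∈ e, a = Sum.inr v} ∧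
    SatisfiesHab (edgesWithRungs G C)
      ({a | ∃ v ∈ e, a = Sum.inl v} ∪ {a | ∃ v ∈ e, a = Sum.inr v}) := by
  have hd := G.not_isDiag_of_mem_edgeSet he
  have hL : SatisfiesHab (edgesWithRungs G C) _ :=
    (satisfiesHab_habitat_iff Sum.inl_injective hd).2 (.inl (.inl ⟨e, he, rfl⟩))
  have hR : SatisfiesHab (edgesWithRungs G C) _ :=
    (satisfiesHab_habitat_iff Sum.inr_injective hd).2 (.inl (.inr ⟨e, he, rfl⟩))
  obtain ⟨v, hvC, hve⟩ := hC
  exact ⟨hL, hR, hL.union hR (a := Sum.inl v) (b := Sum.inr v) ⟨v, hve, rfl⟩ ⟨v, hve, rfl⟩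
    ((fromEdgeSet_adj _).2 ⟨Or.inr ⟨v, hvC, rfl⟩, Sum.inl_ne_inr⟩)⟩

lemma exists_rung_mem_of_satisfiesHab {G : SimpleGraph V} {F : Set (Sym2 (V ⊕ V))}
    (hF : F ⊆ (doubleGraph G).edgeSet) {e : Sym2 V}
    (h : SatisfiesHab F ({a | ∃ v ∈ e, a = Sum.inl v} ∪ {a | ∃ v ∈ e, a = Sum.inr v})) :
    ∃ v, rung v ∈ F ∧ v ∈ e := by
  obtain ⟨u, hu⟩ : ∃ u, u ∈ e := ⟨e.out.1, Sym2.out_fst_mem e⟩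
  obtain ⟨_, ⟨a, ha, rfl⟩ | ⟨a, -, rfl⟩, _, ⟨b, -, rfl⟩ | ⟨b, -, rfl⟩, hl, hr, h'⟩ :=
    exists_adj_of_connected_induce h.2 (Or.inl ⟨u, hu, rfl⟩) (Or.inr ⟨u, hu, rfl⟩)
      (Set.mem_range_self (f := Sum.inl) u) (by simp)
  · exact absurd (Set.mem_range_self b) hr
  · obtain rfl : a = b := hF h'.1
    exact ⟨a, h'.1, ha⟩
  all_goals simp at hl

end Rungs

theorem stmt16_general {V : Type*} [Fintype V] (G : SimpleGraph V) (p : ℕ) :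
    (∃ C : Set V, C.ncard ≤ p ∧ ∀ e ∈ G.edgeSet, ∃ v ∈ C, v ∈ e) ↔
    (∃ F : Set (Sym2 (V ⊕ V)), F ⊆ (doubleGraph G).edgeSet ∧
      F.ncard ≤ 2 * G.edgeSet.ncard + p ∧
      ∀ e ∈ G.edgeSet,
        SatisfiesHab F {a | ∃ v ∈ e, a = Sum.inl v} ∧
        SatisfiesHab F {a | ∃ v ∈ e, a = Sum.inr v} ∧
        SatisfiesHab F ({a | ∃ v ∈ e, a = Sum.inl v} ∪ {a | ∃ v ∈ e, a = Sum.inr v})) := by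
  constructor
  · rintro ⟨C, hCp, hcover⟩
    refine ⟨edgesWithRungs G C, edgesWithRungs_subset_edgeSet G C, ?_,
      fun e he => satisfiesHab_edgesWithRungs he (hcover e he)⟩
    rw [ncard_edgesWithRungs]
    omega
  · rintro ⟨F, hFsub, hFcard, hhab⟩
    refine ⟨{v | rung v ∈ F}, ?_,
      fun e he => exists_rung_mem_of_satisfiesHab hFsub (hhab e he).2.2⟩
    have hsub : edgesWithRungs G {v | rung v ∈ F} ⊆ F := by
      rintro _ ((⟨e, he, rfl⟩ | ⟨e, he, rfl⟩) | ⟨v, hv, rfl⟩)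
      · exact (satisfiesHab_habitat_iff Sum.inl_injective (G.not_isDiag_of_mem_edgeSet he)).1
          (hhab e he).1
      · exact (satisfiesHab_habitat_iff Sum.inr_injective (G.not_isDiag_of_mem_edgeSet he)).1
          (hhab e he).2.1
      · exact hv
    have hle := Set.ncard_le_ncard hsub
    rw [ncard_edgesWithRungs] at hle
    omega

/-- Reduction from Cubic Vertex Cover via two copies joined by a matching: `G` cubic has a
vertex cover of size at most `p` iff there is `F ⊆ E(G')` with `|F| ≤ 2m + p` satisfying
all habitats `Hₗ = eₗ`, `H*ₗ = e*ₗ` and `H'ₗ = eₗ ∪ e*ₗ`. -/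
theorem stmt16 {V : Type*} [Fintype V] (G : SimpleGraph V)
    (hcubic : ∀ v, (G.neighborSet v).ncard = 3) (p : ℕ) :
    (∃ C : Set V, C.ncard ≤ p ∧ ∀ e ∈ G.edgeSet, ∃ v ∈ C, v ∈ e) ↔
    (∃ F : Set (Sym2 (V ⊕ V)), F ⊆ (doubleGraph G).edgeSet ∧
      F.ncard ≤ 2 * G.edgeSet.ncard + p ∧
      ∀ e ∈ G.edgeSet,
        SatisfiesHab F {a | ∃ v ∈ e, a = Sum.inl v} ∧
        SatisfiesHab F {a | ∃ v ∈ e, a = Sum.inr v} ∧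
        SatisfiesHab F ({a | ∃ v ∈ e, a = Sum.inl v} ∪ {a | ∃ v ∈ e, a = Sum.inr v})) :=
  stmt16_general G p
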